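/- arXiv:1811.09092 — 2 statements merged into one kernel-verified Lean document; each statement's English description precedes it below -/
import Mathlib

section
/- Let D be the minimal Dress ring of ℝ(X). Then a rational function r ∈ ℝ(X) belongs to D if and only if there exist real polynomials f and γ such that γ has no real roots (γ(t) ≠ 0 for all t ∈ ℝ), deg f ≤ deg γ, and r = f/γ. -/
/-!
Rational functions `f / γ` with `γ` free of real roots and `deg f ≤ deg γ` form a subring, and it
contains every generator `(1 + x²)⁻¹ = q² / (p² + q²)` (for `x = p / q` in lowest terms); hence it
contains the minimal Dress ring. Conversely, the Dress ring contains the reals, every `(1 + y²)⁻¹`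
and, by a Cayley transform, every `y / (1 + y²)`; hence it contains `P(y) / (1 + y²)` for each real
polynomial `P` of degree at most 2. A real polynomial without real roots is a product of quadratics
`c (1 + ℓ²)` with `ℓ` affine, and Euclidean division by the cofactor splits off one such factor at a
time.
-/

open Polynomial

def minimalDressRing (K : Type*) [Field K] : Subring K :=
  Subring.closure {s : K | ∃ x : K, s = (1 + x ^ 2)⁻¹}

section DressRing

variable {K : Type*} [Field K]

theorem inv_one_add_sq_mem_minimalDressRing (x : K) : (1 + x ^ 2)⁻¹ ∈ minimalDressRing K :=
  Subring.subset_closure ⟨x, rfl⟩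

variable [Algebra ℝ K]

theorem algebraMap_mem_minimalDressRing (c : ℝ) : algebraMap ℝ K c ∈ minimalDressRing K := by
  set s := c - ⌈c⌉ + 1
  have hs₀ : 0 < s := by have := Int.ceil_lt_add_one c; linarith
  have hs₁ : s ≤ 1 := by have := Int.le_ceil c; linarith
  obtain ⟨r, hr⟩ : ∃ r : ℝ, s = (1 + r ^ 2)⁻¹ := by
    refine ⟨√(s⁻¹ - 1), ?_⟩
    rw [Real.sq_sqrt (sub_nonneg.mpr (one_le_inv₀ hs₀ |>.mpr hs₁)), add_sub_cancel, inv_inv]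
  have hc : c = s + ((⌈c⌉ - 1 : ℤ) : ℝ) := by push_cast; ring
  rw [hc, map_add, map_intCast, hr, map_inv₀, map_add, map_one, map_pow]
  exact add_mem (inv_one_add_sq_mem_minimalDressRing _) (intCast_mem _ _)

theorem mul_inv_one_add_sq_mem_minimalDressRing {x : K} (hx : 1 + x ^ 2 ≠ 0) :
    x * (1 + x ^ 2)⁻¹ ∈ minimalDressRing K := by
  have := Algebra.charZero_of_charZero ℝ K
  by_cases h1 : 1 + x = 0
  · rw [eq_neg_of_add_eq_zero_right h1]
    convert algebraMap_mem_minimalDressRing (K := K) (-2⁻¹) using 1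
    simp only [map_neg, map_inv₀, map_ofNat]
    norm_num
  · -- Cayley transform: for `u = (1 - x) / (1 + x)`, `(1 + u²)⁻¹ = 1/2 + x / (1 + x²)`.
    have hu : 1 + ((1 - x) / (1 + x)) ^ 2 = 2 * (1 + x ^ 2) / (1 + x) ^ 2 := by
      field_simp
      ring
    have key : x * (1 + x ^ 2)⁻¹ = (1 + ((1 - x) / (1 + x)) ^ 2)⁻¹ - algebraMap ℝ K 2⁻¹ := by
      rw [hu, inv_div, map_inv₀, map_ofNat]
      field_simp
      ring
    rw [key]
    exact sub_mem (inv_one_add_sq_mem_minimalDressRing _) (algebraMap_mem_minimalDressRing _)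

theorem aeval_mul_inv_one_add_sq_mem_minimalDressRing {x : K} (hx : 1 + x ^ 2 ≠ 0) {p : ℝ[X]}
    (hp : p.natDegree ≤ 2) : aeval x p * (1 + x ^ 2)⁻¹ ∈ minimalDressRing K := by
  have key : aeval x p * (1 + x ^ 2)⁻¹ = algebraMap ℝ K (p.coeff 0) * (1 + x ^ 2)⁻¹ +
      algebraMap ℝ K (p.coeff 1) * (x * (1 + x ^ 2)⁻¹) +
      algebraMap ℝ K (p.coeff 2) * (1 - (1 + x ^ 2)⁻¹) := by
    rw [aeval_eq_sum_range' (Nat.lt_succ_of_le hp)]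
    simp only [Finset.sum_range_succ, Finset.sum_range_zero, Algebra.smul_def]
    field_simp
    ring
  rw [key]
  have := algebraMap_mem_minimalDressRing (K := K)
  refine add_mem (add_mem (mul_mem (this _) ?_) (mul_mem (this _) ?_)) (mul_mem (this _) ?_)
  · exact inv_one_add_sq_mem_minimalDressRing x
  · exact mul_inv_one_add_sq_mem_minimalDressRing hx
  · exact sub_mem (one_mem _) (inv_one_add_sq_mem_minimalDressRing x)

end DressRing

namespace Polynomial

theorem degree_sq_le_degree_sq_add_sq {R : Type*} [CommRing R] [LinearOrder R]
    [IsStrictOrderedRing R] (p q : R[X]) : (q ^ 2).degree ≤ (p ^ 2 + q ^ 2).degree := by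
  rcases eq_or_ne q 0 with rfl | hq
  · simp
  rcases lt_trichotomy (p ^ 2).degree (q ^ 2).degree with h | h | h
  · rw [degree_add_eq_right_of_degree_lt h]
  · have hlc : (p ^ 2).leadingCoeff + (q ^ 2).leadingCoeff ≠ 0 := by
      have := leadingCoeff_ne_zero.mpr hq
      rw [leadingCoeff_pow, leadingCoeff_pow]
      positivity
    rw [degree_add_eq_of_leadingCoeff_add_ne_zero hlc, h, max_self]
  · rw [degree_add_eq_left_of_degree_lt h]
    exact h.le

theorem natDegree_div {K : Type*} [Field K] (p : K[X]) {q : K[X]} (hq : q ≠ 0) :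
    (p / q).natDegree = p.natDegree - q.natDegree := by
  rw [div_def, natDegree_C_mul (inv_ne_zero (leadingCoeff_ne_zero.mpr hq)),
    natDegree_divByMonic _ (monic_mul_leadingCoeff_inv hq), natDegree_mul_leadingCoeff_inv _ hq]

theorem natDegree_eq_two_of_irreducible_of_forall_eval_ne_zero {q : ℝ[X]} (hirr : Irreducible q)
    (hq : ∀ t, q.eval t ≠ 0) : q.natDegree = 2 := by
  have hne : q.natDegree ≠ 1 := fun h => by
    obtain ⟨t, ht⟩ :=
      exists_root_of_degree_eq_one ((degree_eq_iff_natDegree_eq_of_pos one_pos).mpr h)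
    exact hq t ht
  have := hirr.natDegree_pos
  have := hirr.natDegree_le_two
  omega

theorem exists_eq_C_mul_one_add_sq {q : ℝ[X]} (hdeg : q.natDegree = 2)
    (hq : ∀ t, q.eval t ≠ 0) : ∃ c u v : ℝ, u ≠ 0 ∧ q = C c * (1 + (C u * X + C v) ^ 2) := by
  have ha : q.coeff 2 ≠ 0 := by
    rw [← hdeg]
    exact leadingCoeff_ne_zero.mpr fun h => hq 0 (by simp [h])
  set a := q.coeff 2
  have heval : ∀ t, q.eval t = a * t ^ 2 + q.coeff 1 * t + q.coeff 0 := fun t => by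
    rw [eval_eq_sum_range, hdeg]
    simp only [Finset.sum_range_succ, Finset.sum_range_zero]
    ring
  set m := -q.coeff 1 / (2 * a)
  set d := q.eval m / a
  have hvertex : ∀ t, q.eval t = a * ((t - m) ^ 2 + d) := fun t => by
    simp only [d, heval, m]
    field_simp
    ring
  have hd : 0 < d := by
    by_contra! hd
    apply hq (m + √(-d))
    rw [hvertex, add_sub_cancel_left, Real.sq_sqrt (neg_nonneg.mpr hd)]
    ring
  have hsqrt : √d ^ 2 = d := Real.sq_sqrt hd.le
  have hsqrt₀ : √d ≠ 0 := (Real.sqrt_pos.mpr hd).ne'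
  refine ⟨a * d, (√d)⁻¹, -m / √d, inv_ne_zero hsqrt₀, Polynomial.funext fun t => ?_⟩
  rw [hvertex]
  simp only [eval_mul, eval_C, eval_add, eval_one, eval_pow, eval_X]
  field_simp
  rw [hsqrt]
  ring

end Polynomial

namespace RatFunc

section RegularSubring

variable {K : Type*} [Field K]

theorem algebraMap_ne_zero_of_forall_eval_ne_zero {γ : K[X]}
    (hγ : ∀ t, γ.eval t ≠ 0) : algebraMap K[X] (RatFunc K) γ ≠ 0 :=
  algebraMap_ne_zero fun h => hγ 0 (by simp [h])

variable (K)

/-- The rational functions without poles on `ℙ¹(K)`. -/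
def regularSubring : Subring (RatFunc K) where
  carrier := {r | ∃ f γ : K[X], (∀ t, γ.eval t ≠ 0) ∧ f.degree ≤ γ.degree ∧
    r = algebraMap K[X] (RatFunc K) f / algebraMap K[X] (RatFunc K) γ}
  zero_mem' := ⟨0, 1, by simp, by simp, by simp⟩
  one_mem' := ⟨1, 1, by simp, le_rfl, by simp⟩
  neg_mem' := by
    rintro _ ⟨f, γ, hγ, hf, rfl⟩
    exact ⟨-f, γ, hγ, by rwa [degree_neg], by rw [map_neg, neg_div]⟩
  add_mem' := by
    rintro _ _ ⟨f₁, γ₁, hγ₁, hf₁, rfl⟩ ⟨f₂, γ₂, hγ₂, hf₂, rfl⟩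
    refine ⟨f₁ * γ₂ + γ₁ * f₂, γ₁ * γ₂, fun t => by simp [hγ₁ t, hγ₂ t], ?_, ?_⟩
    · refine (degree_add_le _ _).trans (max_le ?_ ?_) <;> rw [degree_mul, degree_mul] <;> gcongr
    · rw [div_add_div _ _ (algebraMap_ne_zero_of_forall_eval_ne_zero hγ₁)
        (algebraMap_ne_zero_of_forall_eval_ne_zero hγ₂)]
      simp only [map_add, map_mul]
  mul_mem' := by
    rintro _ _ ⟨f₁, γ₁, hγ₁, hf₁, rfl⟩ ⟨f₂, γ₂, hγ₂, hf₂, rfl⟩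
    refine ⟨f₁ * f₂, γ₁ * γ₂, fun t => by simp [hγ₁ t, hγ₂ t], ?_, ?_⟩
    · rw [degree_mul, degree_mul]
      gcongr
    · rw [div_mul_div_comm, map_mul, map_mul]

variable [LinearOrder K] [IsStrictOrderedRing K]

theorem inv_one_add_sq_mem_regularSubring (x : RatFunc K) : (1 + x ^ 2)⁻¹ ∈ regularSubring K := by
  refine ⟨x.denom ^ 2, x.num ^ 2 + x.denom ^ 2, fun t => ?_,
    degree_sq_le_degree_sq_add_sq _ _, ?_⟩
  · have := aeval_ne_zero_of_isCoprime (isCoprime_num_denom x) t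
    simp only [Polynomial.coe_aeval_eq_eval] at this
    simp only [Polynomial.eval_add, Polynomial.eval_pow]
    rcases this with h | h <;> positivity
  · conv_lhs => rw [← num_div_denom x]
    rw [div_pow, one_add_div (pow_ne_zero 2 (algebraMap_ne_zero x.denom_ne_zero)), inv_div,
      map_pow, map_add, map_pow, map_pow, add_comm]

theorem minimalDressRing_le_regularSubring : minimalDressRing (RatFunc K) ≤ regularSubring K :=
  Subring.closure_le.mpr <| by
    rintro _ ⟨x, rfl⟩
    exact inv_one_add_sq_mem_regularSubring K x

end RegularSubring

end RatFunc

theorem algebraMap_div_mem_minimalDressRing_of_natDegree_eq_two {g q : ℝ[X]}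
    (hdeg : q.natDegree = 2) (hq : ∀ t, q.eval t ≠ 0) (hg : g.natDegree ≤ 2) :
    algebraMap ℝ[X] (RatFunc ℝ) g / algebraMap ℝ[X] (RatFunc ℝ) q ∈
      minimalDressRing (RatFunc ℝ) := by
  have hq₀ := RatFunc.algebraMap_ne_zero_of_forall_eval_ne_zero hq
  obtain ⟨c, u, v, hu, rfl⟩ := exists_eq_C_mul_one_add_sq hdeg hq
  set p := g.comp (C u⁻¹ * (X - C v))
  have hgp : g = aeval (C u * X + C v) p := by
    rw [← comp_eq_aeval, comp_assoc]
    simp [← mul_assoc, ← C_mul, inv_mul_cancel₀ hu]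
  have hp : p.natDegree ≤ 2 := by
    have : (C u⁻¹ * (X - C v)).natDegree ≤ 1 := by compute_degree
    exact natDegree_comp_le.trans ((Nat.mul_le_mul hg this).trans_eq (mul_one 2))
  set y := algebraMap ℝ[X] (RatFunc ℝ) (C u * X + C v)
  have hφq : algebraMap ℝ[X] (RatFunc ℝ) (C c * (1 + (C u * X + C v) ^ 2))
      = algebraMap ℝ (RatFunc ℝ) c * (1 + y ^ 2) := by
    rw [map_mul, RatFunc.algebraMap_C, ← RatFunc.algebraMap_eq_C, map_add, map_one, map_pow]
  rw [hφq] at hq₀ ⊢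
  have hy : 1 + y ^ 2 ≠ 0 := right_ne_zero_of_mul hq₀
  have hc : algebraMap ℝ (RatFunc ℝ) c ≠ 0 := left_ne_zero_of_mul hq₀
  have key : algebraMap ℝ[X] (RatFunc ℝ) g / (algebraMap ℝ (RatFunc ℝ) c * (1 + y ^ 2)) =
      algebraMap ℝ (RatFunc ℝ) c⁻¹ * (aeval y p * (1 + y ^ 2)⁻¹) := by
    rw [hgp, aeval_algebraMap_apply, map_inv₀]
    field_simp
  rw [key]
  exact mul_mem (algebraMap_mem_minimalDressRing _)
    (aeval_mul_inv_one_add_sq_mem_minimalDressRing hy hp)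

theorem algebraMap_div_mem_minimalDressRing {f γ : ℝ[X]} (hγ : ∀ t, γ.eval t ≠ 0)
    (hf : f.degree ≤ γ.degree) :
    algebraMap ℝ[X] (RatFunc ℝ) f / algebraMap ℝ[X] (RatFunc ℝ) γ ∈
      minimalDressRing (RatFunc ℝ) := by
  induction γ using WfDvdMonoid.induction_on_irreducible generalizing f with
  | zero => exact (hγ 0 eval_zero).elim
  | unit γ hunit =>
    obtain ⟨c, -, rfl⟩ := Polynomial.isUnit_iff.mp hunit
    rw [eq_C_of_degree_le_zero (hf.trans degree_C_le), RatFunc.algebraMap_C, RatFunc.algebraMap_C,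
      ← map_div₀, ← RatFunc.algebraMap_eq_C]
    exact algebraMap_mem_minimalDressRing _
  | mul a i ha hirr ih =>
    have hi : ∀ t, i.eval t ≠ 0 := fun t => left_ne_zero_of_mul (by simpa using hγ t)
    have ha' : ∀ t, a.eval t ≠ 0 := fun t => right_ne_zero_of_mul (by simpa using hγ t)
    have hdeg := natDegree_eq_two_of_irreducible_of_forall_eval_ne_zero hirr hi
    have hquot : (f / a).natDegree ≤ 2 := by
      have := natDegree_le_natDegree hf
      rw [natDegree_mul hirr.ne_zero ha, hdeg] at this
      rw [natDegree_div _ ha]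
      omega
    have key : algebraMap ℝ[X] (RatFunc ℝ) f / algebraMap ℝ[X] (RatFunc ℝ) (i * a) =
        algebraMap ℝ[X] (RatFunc ℝ) (f / a) / algebraMap ℝ[X] (RatFunc ℝ) i +
        algebraMap ℝ[X] (RatFunc ℝ) (f % a) / algebraMap ℝ[X] (RatFunc ℝ) a *
        (algebraMap ℝ[X] (RatFunc ℝ) 1 / algebraMap ℝ[X] (RatFunc ℝ) i) := by
      have := RatFunc.algebraMap_ne_zero_of_forall_eval_ne_zero hi
      have := RatFunc.algebraMap_ne_zero_of_forall_eval_ne_zero ha'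
      conv_lhs => rw [← EuclideanDomain.div_add_mod f a]
      simp only [map_add, map_mul, map_one]
      field_simp
    rw [key]
    exact add_mem (algebraMap_div_mem_minimalDressRing_of_natDegree_eq_two hdeg hi hquot)
      (mul_mem (ih ha' (degree_mod_lt f ha).le)
        (algebraMap_div_mem_minimalDressRing_of_natDegree_eq_two hdeg hi (by simp)))

theorem minimalDressRing_ratFunc_eq_regularSubring :
    minimalDressRing (RatFunc ℝ) = RatFunc.regularSubring ℝ :=
  le_antisymm (RatFunc.minimalDressRing_le_regularSubring ℝ) <| by
    rintro _ ⟨f, γ, hγ, hf, rfl⟩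
    exact algebraMap_div_mem_minimalDressRing hγ hf

/-- A rational function `r ∈ ℝ(X)` belongs to the minimal Dress ring of
`ℝ(X)` iff `r = f / γ` with `f, γ` real polynomials, `γ` without real roots and
`deg f ≤ deg γ`. -/
theorem mem_minimalDressRing_ratFunc_iff (r : RatFunc ℝ) :
    r ∈ Subring.closure {s : RatFunc ℝ | ∃ x : RatFunc ℝ, s = (1 + x ^ 2)⁻¹} ↔
      ∃ f γ : Polynomial ℝ, (∀ t : ℝ, γ.eval t ≠ 0) ∧ f.degree ≤ γ.degree ∧
        r = algebraMap (Polynomial ℝ) (RatFunc ℝ) f /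
            algebraMap (Polynomial ℝ) (RatFunc ℝ) γ :=
  SetLike.ext_iff.mp minimalDressRing_ratFunc_eq_regularSubring r
end

section
/- Let D be the minimal Dress ring of ℝ(X), let ι be an index type and r : ι → D a family of elements of D, and let J be the ideal of D generated by {r i : i ∈ ι}. Then J^2 equals the ideal of D generated by the squares {(r i)^2 : i ∈ ι}. -/
open Polynomial

lemma one_add_sq_ne_zero' (x : RatFunc ℝ) : 1 + x ^ 2 ≠ 0 := by
  intro h
  have hd := x.denom_ne_zero
  have hden : (algebraMap (Polynomial ℝ) (RatFunc ℝ)) x.denom ≠ 0 := by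
    simpa using hd
  have hxx : algebraMap (Polynomial ℝ) (RatFunc ℝ) x.num
      = x * algebraMap (Polynomial ℝ) (RatFunc ℝ) x.denom := by
    exact (div_eq_iff hden).1 (RatFunc.num_div_denom x)
  have h2 : (algebraMap (Polynomial ℝ) (RatFunc ℝ) x.num) ^ 2
      + (algebraMap (Polynomial ℝ) (RatFunc ℝ) x.denom) ^ 2 = 0 := by
    rw [hxx]
    linear_combination (algebraMap (Polynomial ℝ) (RatFunc ℝ) x.denom) ^ 2 * h
  have h3 : x.num ^ 2 + x.denom ^ 2 = 0 := by
    apply IsFractionRing.injective (Polynomial ℝ) (RatFunc ℝ)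
    simpa [map_add, map_pow] using h2
  have hz : x.denom = (0 : Polynomial ℝ) := by
    apply Polynomial.funext
    intro t
    have := congrArg (Polynomial.eval t) h3
    simp only [Polynomial.eval_add, Polynomial.eval_pow, Polynomial.eval_zero] at this
    have h4 : x.denom.eval t = 0 := by nlinarith [sq_nonneg (x.num.eval t), sq_nonneg (x.denom.eval t)]
    simpa using h4
  exact hd hz

lemma half_mem' : (2 : RatFunc ℝ)⁻¹ ∈
    Subring.closure {s : RatFunc ℝ | ∃ x : RatFunc ℝ, s = (1 + x ^ 2)⁻¹} :=
  Subring.subset_closure ⟨1, by norm_num⟩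

lemma ratio_mem' (x : RatFunc ℝ) : x / (1 + x ^ 2) ∈
    Subring.closure {s : RatFunc ℝ | ∃ x : RatFunc ℝ, s = (1 + x ^ 2)⁻¹} := by
  by_cases hx : x = -1
  · subst hx
    have : (-1 : RatFunc ℝ) / (1 + (-1) ^ 2) = -(2 : RatFunc ℝ)⁻¹ := by
      rw [neg_div]; norm_num
    rw [this]
    exact neg_mem half_mem'
  · have h1x : (1 : RatFunc ℝ) + x ≠ 0 := fun h => hx (eq_neg_of_add_eq_zero_right h)
    set u : RatFunc ℝ := (1 - x) / (1 + x) with hu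
    have key : x / (1 + x ^ 2) = (1 + u ^ 2)⁻¹ - (2 : RatFunc ℝ)⁻¹ := by
      have h2 : (2 : RatFunc ℝ) ≠ 0 := by
        intro h
        have := one_add_sq_ne_zero' (1 : RatFunc ℝ)
        norm_num at this
        exact two_ne_zero h
      have h3 := one_add_sq_ne_zero' x
      have h4 := one_add_sq_ne_zero' u
      rw [hu] at h4 ⊢
      field_simp at h4 ⊢
      ring_nf
      have h5 : (2 : RatFunc ℝ) + x ^ 2 * 2 ≠ 0 := fun h => h3 (by linear_combination h / 2)
      field_simp
      ring
    rw [key]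
    exact sub_mem (Subring.subset_closure ⟨u, rfl⟩) half_mem'

lemma mul_eq_sq_comb (a b : ↥(Subring.closure {s : RatFunc ℝ | ∃ x : RatFunc ℝ, s = (1 + x ^ 2)⁻¹})) :
    ∃ w, a * b = a ^ 2 * w + b ^ 2 * w := by
  by_cases ha : (a : RatFunc ℝ) = 0
  · refine ⟨0, ?_⟩
    have ha' : a = 0 := Subtype.ext ha
    subst ha'
    ring
  · set c : RatFunc ℝ := (b : RatFunc ℝ) / (a : RatFunc ℝ) with hc
    refine ⟨⟨c / (1 + c ^ 2), ratio_mem' c⟩, ?_⟩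
    apply Subtype.ext
    push_cast
    have hne := one_add_sq_ne_zero' c
    rw [hc] at hne ⊢
    field_simp at hne ⊢
    ring_nf
    ring_nf at hne
    have h5 : (a : RatFunc ℝ) * (b : RatFunc ℝ) ^ 2 + (a : RatFunc ℝ) ^ 3 ≠ 0 := by
      intro h
      apply ha
      have h6 : (a : RatFunc ℝ) * ((a : RatFunc ℝ) ^ 2 + (b : RatFunc ℝ) ^ 2) = 0 := by
        linear_combination h
      rcases mul_eq_zero.1 h6 with h' | h'
      · exact h'
      · exact absurd (by rw [← add_mul, h', zero_mul]) hne
    have h7 : (b : RatFunc ℝ) ^ 2 + (a : RatFunc ℝ) ^ 2 ≠ 0 := fun h => hne (by rw [← add_mul, add_comm, h, zero_mul])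
    field_simp [h5]
    ring

/-- In the minimal Dress ring `D` of `ℝ(X)`, the square of the ideal
generated by a family `(rᵢ)` is the ideal generated by the squares `(rᵢ²)`. -/
theorem minimalDressRing_ideal_sq (ι : Type*)
    (r : ι → ↥(Subring.closure {s : RatFunc ℝ | ∃ x : RatFunc ℝ, s = (1 + x ^ 2)⁻¹})) :
    (Ideal.span (Set.range r)) ^ 2 = Ideal.span (Set.range (fun i => (r i) ^ 2)) := by
  apply le_antisymm
  · rw [sq, Ideal.span_mul_span, Ideal.span_le]
    rintro x hx
    rw [Set.mem_mul] at hx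
    obtain ⟨a, ⟨i, rfl⟩, b, ⟨j, rfl⟩, rfl⟩ := hx
    obtain ⟨w, hw⟩ := mul_eq_sq_comb (r i) (r j)
    rw [hw]
    exact add_mem
      (Ideal.mul_mem_right _ _ (Ideal.subset_span ⟨i, rfl⟩))
      (Ideal.mul_mem_right _ _ (Ideal.subset_span ⟨j, rfl⟩))
  · rw [Ideal.span_le]
    rintro x ⟨i, rfl⟩
    rw [sq]
    simpa [pow_two] using
      Ideal.mul_mem_mul (Ideal.subset_span ⟨i, rfl⟩ : r i ∈ Ideal.span (Set.range r))
        (Ideal.subset_span ⟨i, rfl⟩ : r i ∈ Ideal.span (Set.range r))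
end
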